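/- Every renaming symmetric Boolean game is an exact potential game: if n ≥ 1, c : Fin n → ((Fin n → Fin 2) → ℝ), and there exists a renaming r : Fin n → Equiv.Perm (Fin 2) such that the renamed game c^r i x := c i (fun j => (r j)⁻¹ (x j)) is ordinary symmetric, then there exists P : (Fin n → Fin 2) → ℝ such that for every player i and all profiles x, y with x j = y j for all j ≠ i, c i x − c i y = P x − P y. -/

import Mathlib

/-!
A symmetric game with two strategies is an exact potential game: by symmetry the gain
`w k` of a player switching from `0` to `1` depends only on the number `k` of other
players playing `1`, so `P x = ∑_{k < #{j | x j = 1}} w k` is an exact potential.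
Renaming strategies transports potentials, so the renamed symmetric game's potential,
composed with the renaming, is one for the original game.
-/

open Finset Function

section Games

variable {ι A G : Type*}

def IsExactPotential [AddCommGroup G] (c : ι → (ι → A) → G) (P : (ι → A) → G) : Prop :=
  ∀ (i : ι) (x y : ι → A), (∀ j, j ≠ i → x j = y j) → c i x - c i y = P x - P y

def IsSymmetricGame (c : ι → (ι → A) → G) : Prop :=
  ∀ (σ : Equiv.Perm ι) (i : ι) (x : ι → A), c i x = c (σ i) (x ∘ σ.symm)

theorem IsExactPotential.of_update [AddCommGroup G] [DecidableEq ι]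
    {c : ι → (ι → A) → G} {P : (ι → A) → G}
    (h : ∀ i x a b, c i (update x i a) - P (update x i a) = c i (update x i b) - P (update x i b)) :
    IsExactPotential c P := by
  intro i x y hxy
  have hy : update x i (y i) = y := by
    ext j
    rcases eq_or_ne j i with rfl | hj
    · simp
    · simp [hj, hxy j hj]
  have := h i x (x i) (y i)
  rw [update_eq_self, hy] at this
  rwa [sub_eq_sub_iff_sub_eq_sub]

theorem IsExactPotential.comp [AddCommGroup G] {B : Type*}
    {c : ι → (ι → B) → G} {P : (ι → B) → G} (hP : IsExactPotential c P) (f : ι → A → B) :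
    IsExactPotential (fun i x => c i fun j => f j (x j)) (fun x => P fun j => f j (x j)) :=
  fun i _ _ hxy => hP i _ _ fun j hj => congrArg (f j) (hxy j hj)

theorem IsSymmetricGame.apply_eq_of_card_eq [Fintype ι] [DecidableEq ι] [DecidableEq A]
    {c : ι → (ι → A) → G} (hc : IsSymmetricGame c) {i i' : ι} {x x' : ι → A}
    (hi : x i = x' i')
    (hcard : ∀ a, #{j ∈ univ.erase i | x j = a} = #{j ∈ univ.erase i' | x' j = a}) :
    c i x = c i' x' := by
  -- A permutation matching the fibres of the tagged profiles sends `i` to `i'` and `x` to `x'`.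
  let tag (i : ι) (x : ι → A) (j : ι) : Option A := if j = i then none else some (x j)
  have hnone (i : ι) (x : ι → A) : ({j | tag i x j = none} : Finset ι) = {i} := by
    ext; simp [tag]
  have hsome (i : ι) (x : ι → A) (a : A) :
      ({j | tag i x j = some a} : Finset ι) = {j ∈ univ.erase i | x j = a} := by
    ext; simp [tag]
  have hfiber (o : Option A) :
      Fintype.card {j // tag i x j = o} = Fintype.card {j // tag i' x' j = o} := by
    cases o <;> simp only [Fintype.card_subtype, hnone, hsome, hcard, card_singleton]
  let σ := Equiv.ofFiberEquiv fun o => Fintype.equivOfCardEq (hfiber o)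
  have hσ : ∀ j, tag i' x' (σ j) = tag i x j := Equiv.ofFiberEquiv_map _
  have hσi : σ i = i' := by simpa [tag] using hσ i
  have hσx : ∀ j, x' (σ j) = x j := by
    intro j
    rcases eq_or_ne j i with rfl | hj
    · rw [hσi, hi]
    · have := hσ j
      simp only [tag, hj, if_false] at this
      split_ifs at this
      exact Option.some_injective _ this
  rw [hc σ i x, hσi]
  congr 1
  ext m
  simp [← hσx]

end Games

section BooleanGames

variable {ι G : Type*}

theorem card_filter_eq_zero_add_card_filter_eq_one (s : Finset ι) (x : ι → Fin 2) :
    #{j ∈ s | x j = 0} + #{j ∈ s | x j = 1} = #s := by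
  rw [add_comm, ← card_filter_add_card_filter_not (s := s) (fun j => x j = 1)]
  congr 2
  exact filter_congr fun j _ => by omega

variable [Fintype ι] [DecidableEq ι]

theorem card_filter_update_of_ne (x : ι → Fin 2) (i : ι) (a b : Fin 2) :
    #{j ∈ univ.erase i | update x i a j = b} = #{j ∈ univ.erase i | x j = b} :=
  congrArg card <| filter_congr fun j hj => by rw [update_of_ne (ne_of_mem_erase hj)]

theorem card_filter_eq_one_eq_erase_add (x : ι → Fin 2) (i : ι) :
    #{j | x j = 1} = #{j ∈ univ.erase i | x j = 1} + if x i = 1 then 1 else 0 := by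
  rw [filter_erase]
  split_ifs with h
  · rw [card_erase_add_one (by simpa using h)]
  · rw [erase_eq_of_notMem (by simpa using h), add_zero]

theorem IsSymmetricGame.apply_eq_of_card_eq_one {c : ι → (ι → Fin 2) → G}
    (hc : IsSymmetricGame c) {i i' : ι} {x x' : ι → Fin 2} (hi : x i = x' i')
    (hk : #{j ∈ univ.erase i | x j = 1} = #{j ∈ univ.erase i' | x' j = 1}) :
    c i x = c i' x' := by
  refine hc.apply_eq_of_card_eq hi fun a => ?_
  have h := card_filter_eq_zero_add_card_filter_eq_one (univ.erase i) x
  have h' := card_filter_eq_zero_add_card_filter_eq_one (univ.erase i') x'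
  rw [card_erase_of_mem (mem_univ _)] at h h'
  fin_cases a <;> simp only [Fin.zero_eta, Fin.mk_one] <;> omega

variable [AddCommGroup G]

open Classical in
/-- Read off an arbitrary profile in which `k` other players play `1` (junk `0` if there is
none); for a symmetric game the choice does not matter. -/
noncomputable def flipGain (c : ι → (ι → Fin 2) → G) (k : ℕ) : G :=
  if h : ∃ p : ι × (ι → Fin 2), #{j ∈ univ.erase p.1 | p.2 j = 1} = k then
    c h.choose.1 (update h.choose.2 h.choose.1 1) - c h.choose.1 (update h.choose.2 h.choose.1 0)
  else 0

noncomputable def symmetricPotential (c : ι → (ι → Fin 2) → G) (x : ι → Fin 2) : G :=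
  ∑ k ∈ range #{j | x j = 1}, flipGain c k

theorem IsSymmetricGame.sub_update_eq_flipGain {c : ι → (ι → Fin 2) → G}
    (hc : IsSymmetricGame c) (i : ι) (x : ι → Fin 2) :
    c i (update x i 1) - c i (update x i 0) = flipGain c #{j ∈ univ.erase i | x j = 1} := by
  have h : ∃ p : ι × (ι → Fin 2),
      #{j ∈ univ.erase p.1 | p.2 j = 1} = #{j ∈ univ.erase i | x j = 1} := ⟨(i, x), rfl⟩
  have hchoose (a : Fin 2) :
      c i (update x i a) = c h.choose.1 (update h.choose.2 h.choose.1 a) :=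
    hc.apply_eq_of_card_eq_one (by simp) <| by
      simp only [card_filter_update_of_ne]
      exact h.choose_spec.symm
  rw [flipGain, dif_pos h, hchoose, hchoose]

theorem symmetricPotential_update_one_sub_update_zero (c : ι → (ι → Fin 2) → G) (i : ι)
    (x : ι → Fin 2) :
    symmetricPotential c (update x i 1) - symmetricPotential c (update x i 0)
      = flipGain c #{j ∈ univ.erase i | x j = 1} := by
  rw [symmetricPotential, symmetricPotential, card_filter_eq_one_eq_erase_add _ i,
    card_filter_eq_one_eq_erase_add (update x i 0) i]
  simp [card_filter_update_of_ne, sum_range_succ]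

theorem IsSymmetricGame.isExactPotential {c : ι → (ι → Fin 2) → G} (hc : IsSymmetricGame c) :
    IsExactPotential c (symmetricPotential c) := by
  refine IsExactPotential.of_update fun i x a b => ?_
  have hflip : c i (update x i 1) - symmetricPotential c (update x i 1)
      = c i (update x i 0) - symmetricPotential c (update x i 0) := by
    rw [sub_eq_sub_iff_sub_eq_sub, hc.sub_update_eq_flipGain,
      symmetricPotential_update_one_sub_update_zero]
  have hconst (a : Fin 2) : c i (update x i a) - symmetricPotential c (update x i a)
      = c i (update x i 0) - symmetricPotential c (update x i 0) := by
    fin_cases a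
    · rfl
    · exact hflip
  rw [hconst a, hconst b]

end BooleanGames

theorem stmt18_general (n : ℕ) (c : Fin n → (Fin n → Fin 2) → ℝ)
    (h : ∃ r : Fin n → Equiv.Perm (Fin 2),
      ∀ (σ : Equiv.Perm (Fin n)) (i : Fin n) (x : Fin n → Fin 2),
        c i (fun j => (r j)⁻¹ (x j))
          = c (σ i) (fun j => (r j)⁻¹ ((x ∘ ⇑σ.symm) j))) :
    ∃ P : (Fin n → Fin 2) → ℝ,
      ∀ (i : Fin n) (x y : Fin n → Fin 2), (∀ j, j ≠ i → x j = y j) →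
        c i x - c i y = P x - P y := by
  obtain ⟨r, hr⟩ := h
  let d : Fin n → (Fin n → Fin 2) → ℝ := fun i x => c i fun j => (r j)⁻¹ (x j)
  have hd : IsSymmetricGame d := hr
  have hc : c = fun i x => d i fun j => r j (x j) := by
    ext i x
    simp [d]
  rw [hc]
  exact ⟨_, hd.isExactPotential.comp fun j => r j⟩

/-- every renaming symmetric Boolean game is an exact potential
game: if some renamed game `c^r i x = c i (fun j => (r j)⁻¹ (x j))` is
ordinary symmetric, then `c` has an exact potential function. -/
theorem stmt18 (n : ℕ) (hn : 1 ≤ n) (c : Fin n → (Fin n → Fin 2) → ℝ)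
    (h : ∃ r : Fin n → Equiv.Perm (Fin 2),
      ∀ (σ : Equiv.Perm (Fin n)) (i : Fin n) (x : Fin n → Fin 2),
        c i (fun j => (r j)⁻¹ (x j))
          = c (σ i) (fun j => (r j)⁻¹ ((x ∘ ⇑σ.symm) j))) :
    ∃ P : (Fin n → Fin 2) → ℝ,
      ∀ (i : Fin n) (x y : Fin n → Fin 2), (∀ j, j ≠ i → x j = y j) →
        c i x - c i y = P x - P y :=
  stmt18_general n c h
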